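/- arXiv:1205.0843 — 3 statements merged into one kernel-verified Lean document; each statement's English description precedes it below -/
import Mathlib

section
/- Let x'_2, ..., x'_n be independent, with x'_i uniform on [0, 1−s_i], where 0 ≤ s_i ≤ 1 and s_1 := (n−2) − (s_2 + ... + s_n) satisfies 0 ≤ s_1 ≤ 1 − n^{−2B−2} and each s_i ≤ 1 − n^{−2B−2} for i ≥ 2. Then P(s_1 ≤ x'_2 + ... + x'_n ≤ 1) ≥ (1−s_1)/(1+s_1), which is Ω(n^{−2B−2}). -/
/-!
With `aᵢ = 1 - sᵢ > 0` and `∑ aᵢ = 1 + s₁`, the law of `∑ xᵢ` is the convolution of the uniform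
laws on the `[0, aᵢ]`. Convolving with a uniform density averages over windows of fixed length,
which preserves symmetric unimodality; so the law of the sum has a density that is symmetric about
`(1 + s₁) / 2`, nonincreasing away from it, and carries all the mass on `[0, 1 + s₁]`. Stretching
the central interval `[s₁, 1]` onto `[0, 1 + s₁]` by the factor `(1 + s₁) / (1 - s₁)` can only
decrease such a density, so `[s₁, 1]` carries at least the fraction `(1 - s₁) / (1 + s₁)` of the
mass.
-/

open MeasureTheory ProbabilityTheory Set pdf
open scoped ENNReal

def IsSymmUnimodal (m : ℝ) (f : ℝ → ℝ≥0∞) : Prop :=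
  ∀ ⦃x y⦄, |x - m| ≤ |y - m| → f y ≤ f x

lemma isSymmUnimodal_of_antitoneOn {m : ℝ} {f : ℝ → ℝ≥0∞} (hsymm : ∀ x, f (2 * m - x) = f x)
    (hanti : AntitoneOn f (Ici m)) : IsSymmUnimodal m f := by
  have hf_eq : ∀ x, f x = f (m + |x - m|) := by
    intro x
    rcases le_total m x with h | h
    · rw [abs_of_nonneg (sub_nonneg.2 h), add_sub_cancel]
    · rw [abs_of_nonpos (sub_nonpos.2 h), ← hsymm x]; ring_nf
  intro x y hxy
  rw [hf_eq x, hf_eq y]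
  exact hanti (by simp) (by simp) (by linarith)

lemma setLIntegral_Ioc_comp_add_right (f : ℝ → ℝ≥0∞) (a b δ : ℝ) :
    ∫⁻ x in Ioc a b, f (x + δ) = ∫⁻ x in Ioc (a + δ) (b + δ), f x := by
  have h := (measurePreserving_add_right volume δ).setLIntegral_comp_preimage_emb
    (measurableEmbedding_addRight δ) f (Ioc (a + δ) (b + δ))
  rwa [preimage_add_const_Ioc, add_sub_cancel_right, add_sub_cancel_right] at h

lemma setLIntegral_Ioc_comp_const_sub (f : ℝ → ℝ≥0∞) (a b r : ℝ) :
    ∫⁻ x in Ioc a b, f (r - x) = ∫⁻ x in Ioc (r - b) (r - a), f x := by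
  have h := (Measure.measurePreserving_sub_left volume r).setLIntegral_comp_preimage_emb
    (MeasurableEquiv.subLeft r).measurableEmbedding f (Ioc (r - b) (r - a))
  rw [preimage_const_sub_Ioc, sub_sub_cancel, sub_sub_cancel] at h
  rw [← h]
  exact setLIntegral_congr (Ioc_ae_eq_Icc.trans Ico_ae_eq_Icc.symm)

lemma setLIntegral_Icc_comp_add_right (f : ℝ → ℝ≥0∞) (a b δ : ℝ) :
    ∫⁻ x in Icc a b, f (x + δ) = ∫⁻ x in Icc (a + δ) (b + δ), f x := by
  have h := (measurePreserving_add_right volume δ).setLIntegral_comp_preimage_emb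
    (measurableEmbedding_addRight δ) f (Icc (a + δ) (b + δ))
  rwa [preimage_add_const_Icc, add_sub_cancel_right, add_sub_cancel_right] at h

lemma setLIntegral_Icc_comp_mul_left {f : ℝ → ℝ≥0∞} (hf : Measurable f) {c : ℝ} (hc : 0 < c)
    (a b : ℝ) :
    ∫⁻ x in Icc (c * a) (c * b), f x = ENNReal.ofReal c * ∫⁻ x in Icc a b, f (c * x) := by
  have h := setLIntegral_map (μ := volume) (measurableSet_Icc (a := c * a) (b := c * b)) hf
    (measurable_const_mul c)
  rw [Real.map_volume_mul_left hc.ne', preimage_const_mul_Icc₀ _ _ hc, Measure.restrict_smul,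
    lintegral_smul_measure, mul_div_cancel_left₀ _ hc.ne', mul_div_cancel_left₀ _ hc.ne'] at h
  rw [← h, smul_eq_mul, ← mul_assoc, ← ENNReal.ofReal_mul hc.le, abs_of_pos (inv_pos.2 hc),
    mul_inv_cancel₀ hc.ne', ENNReal.ofReal_one, one_mul]

namespace IsSymmUnimodal

variable {m : ℝ} {f : ℝ → ℝ≥0∞}

lemma apply_two_mul_sub (hf : IsSymmUnimodal m f) (x : ℝ) : f (2 * m - x) = f x := by
  have h : |2 * m - x - m| = |x - m| := by rw [abs_sub_comm x m]; ring_nf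
  exact le_antisymm (hf h.ge) (hf h.le)

lemma measurable (hf : IsSymmUnimodal m f) : Measurable f := by
  have hanti : Antitone fun r : ℝ => f (m + max r 0) := fun r r' hrr' => hf (by
    simpa [abs_of_nonneg] using max_le_max_right 0 hrr')
  have hf_eq : f = fun x => f (m + max |x - m| 0) := funext fun x =>
    le_antisymm (hf (by simp)) (hf (by simp))
  rw [hf_eq]
  exact hanti.measurable.comp (measurable_id.sub_const m).abs

lemma const_mul (hf : IsSymmUnimodal m f) (c : ℝ≥0∞) : IsSymmUnimodal m (fun x => c * f x) :=
  fun _ _ h => mul_le_mul_right (hf h) c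

lemma apply_add_le (hf : IsSymmUnimodal m f) {x δ : ℝ} (hδ : 0 ≤ δ) (hx : m ≤ x + δ / 2) :
    f (x + δ) ≤ f x :=
  hf <| by rw [abs_of_nonneg (by linarith : 0 ≤ x + δ - m), abs_le]; constructor <;> linarith

lemma setLIntegral_Ioc (hf : IsSymmUnimodal m f) {a : ℝ} (ha : 0 ≤ a) :
    IsSymmUnimodal (m + a / 2) (fun x => ∫⁻ y in Ioc (x - a) x, f y) := by
  refine isSymmUnimodal_of_antitoneOn (fun x => ?_) ?_
  · calc ∫⁻ y in Ioc (2 * (m + a / 2) - x - a) (2 * (m + a / 2) - x), f y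
        = ∫⁻ y in Ioc (x - a) x, f (2 * m - y) := by
          rw [setLIntegral_Ioc_comp_const_sub]; ring_nf
      _ = ∫⁻ y in Ioc (x - a) x, f y := by simp_rw [hf.apply_two_mul_sub]
  intro x hx x' hx' hxx'
  simp only [mem_Ici] at hx hx'
  by_cases hfar : x + a ≤ x'
  · calc ∫⁻ y in Ioc (x' - a) x', f y = ∫⁻ y in Ioc (x - a) x, f (y + (x' - x)) := by
          rw [setLIntegral_Ioc_comp_add_right]; ring_nf
      _ ≤ ∫⁻ y in Ioc (x - a) x, f y :=
          setLIntegral_mono hf.measurable fun y hy => hf.apply_add_le (by linarith)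
            (by linarith [hy.1])
  · have hsplit : ∀ p q r : ℝ, p ≤ q → q ≤ r →
        ∫⁻ y in Ioc p r, f y = (∫⁻ y in Ioc p q, f y) + ∫⁻ y in Ioc q r, f y :=
      fun p q r hpq hqr => by
        rw [← Ioc_union_Ioc_eq_Ioc hpq hqr, lintegral_union measurableSet_Ioc
          (Ioc_disjoint_Ioc_of_le le_rfl)]
    -- both windows contain `(x' - a, x]`; what is left of the right one is the translate by `a`
    -- of what is left of the left one, and lies farther from `m`
    dsimp only
    rw [hsplit (x' - a) x x' (by linarith) hxx',
      hsplit (x - a) (x' - a) x (by linarith) (by linarith), add_comm]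
    gcongr ?_ + _
    calc ∫⁻ y in Ioc x x', f y = ∫⁻ y in Ioc (x - a) (x' - a), f (y + a) := by
          rw [setLIntegral_Ioc_comp_add_right]; ring_nf
      _ ≤ ∫⁻ y in Ioc (x - a) (x' - a), f y :=
          setLIntegral_mono hf.measurable fun y hy => hf.apply_add_le ha (by linarith [hy.1])

lemma setLIntegral_Icc_le (hf : IsSymmUnimodal m f) {r R : ℝ} (hr : 0 < r) (hrR : r ≤ R) :
    ∫⁻ x in Icc (m - R) (m + R), f x
      ≤ ENNReal.ofReal (R / r) * ∫⁻ x in Icc (m - r) (m + r), f x := by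
  have hc : 0 < R / r := div_pos (hr.trans_le hrR) hr
  have hmeas : Measurable fun x => f (x + m) := hf.measurable.comp (measurable_add_const m)
  calc ∫⁻ x in Icc (m - R) (m + R), f x
      = ∫⁻ x in Icc (R / r * -r) (R / r * r), f (x + m) := by
        rw [setLIntegral_Icc_comp_add_right, div_mul_cancel₀ _ hr.ne', mul_neg,
          div_mul_cancel₀ _ hr.ne']; ring_nf
    _ = ENNReal.ofReal (R / r) * ∫⁻ x in Icc (-r) r, f (R / r * x + m) :=
        setLIntegral_Icc_comp_mul_left hmeas hc _ _
    _ ≤ ENNReal.ofReal (R / r) * ∫⁻ x in Icc (-r) r, f (x + m) := by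
        gcongr with x
        refine hf ?_
        rw [add_sub_cancel_right, add_sub_cancel_right, abs_mul, abs_of_pos hc]
        exact le_mul_of_one_le_left (abs_nonneg x) ((one_le_div hr).2 hrR)
    _ = ENNReal.ofReal (R / r) * ∫⁻ x in Icc (m - r) (m + r), f x := by
        rw [setLIntegral_Icc_comp_add_right]; ring_nf

end IsSymmUnimodal

lemma measurable_uniformPDF {E : Type*} [MeasurableSpace E] (μ : Measure E) {s : Set E}
    (hs : MeasurableSet s) : Measurable fun x => uniformPDF s x μ :=
  (measurable_one.const_smul _).indicator hs

lemma withDensity_uniformPDF {E : Type*} [MeasurableSpace E] (μ : Measure E) {s : Set E}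
    (hs : MeasurableSet s) : μ.withDensity (fun x => uniformPDF s x μ) = μ[|s] := by
  simp only [uniformPDF]
  rw [withDensity_indicator hs, withDensity_smul _ measurable_one, withDensity_one]
  rfl

lemma isSymmUnimodal_uniformPDF_Icc (a : ℝ) :
    IsSymmUnimodal (a / 2) (fun x => uniformPDF (Icc 0 a) x) := by
  have hmem : ∀ x, x ∈ Icc 0 a ↔ |x - a / 2| ≤ a / 2 := fun x => by
    rw [abs_le, mem_Icc]; constructor <;> intro h <;> constructor <;> linarith [h.1, h.2]
  intro x y hxy
  by_cases hy : y ∈ Icc 0 a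
  · simp [uniformPDF_ite, hy, (hmem x).2 (hxy.trans ((hmem y).1 hy))]
  · simp [uniformPDF_ite, hy]

lemma uniformPDF_Icc_lconvolution_apply {f : ℝ → ℝ≥0∞} (hf : Measurable f) (a x : ℝ) :
    ((fun y => uniformPDF (Icc 0 a) y) ⋆ₗ f) x
      = (volume (Icc (0 : ℝ) a))⁻¹ * ∫⁻ y in Ioc (x - a) x, f y := by
  have hint : ∀ y, uniformPDF (Icc 0 a) y * f (-y + x)
      = (Icc 0 a).indicator (fun y => (volume (Icc (0 : ℝ) a))⁻¹ * f (x - y)) y := fun y => by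
    by_cases hy : y ∈ Icc 0 a <;> simp [uniformPDF_ite, hy, neg_add_eq_sub]
  rw [lconvolution_def, lintegral_congr hint, lintegral_indicator measurableSet_Icc,
    lintegral_const_mul _ (by fun_prop),
    ← setLIntegral_congr Ioc_ae_eq_Icc, setLIntegral_Ioc_comp_const_sub, sub_zero]

lemma IsSymmUnimodal.uniformPDF_Icc_lconvolution {m : ℝ} {f : ℝ → ℝ≥0∞}
    (hf : IsSymmUnimodal m f) {a : ℝ} (ha : 0 ≤ a) :
    IsSymmUnimodal (m + a / 2) ((fun y => uniformPDF (Icc 0 a) y) ⋆ₗ f) := by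
  simp_rw [IsSymmUnimodal, uniformPDF_Icc_lconvolution_apply hf.measurable]
  exact (hf.setLIntegral_Ioc ha).const_mul _

lemma map_sum_pi_fin_succ {k : ℕ} (μ : Fin (k + 1) → Measure ℝ) [∀ i, SigmaFinite (μ i)] :
    (Measure.pi μ).map (fun x => ∑ i, x i)
      = μ 0 ∗ (Measure.pi fun i : Fin k => μ i.succ).map (fun x => ∑ i, x i) := by
  have hsum : Measurable fun x : Fin k → ℝ => ∑ i, x i := by fun_prop
  rw [← (measurePreserving_piFinSuccAbove μ 0).symm.map_eq, Measure.conv,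
    ← Measure.map_id (μ := μ 0), Measure.map_prod_map _ _ measurable_id hsum, Measure.map_id,
    Measure.map_map (by fun_prop) (by fun_prop), Measure.map_map (by fun_prop) (by fun_prop)]
  congr 1
  ext x
  simp [Fin.sum_univ_succ]

lemma exists_isSymmUnimodal_map_sum_pi_cond_Icc :
    ∀ (k : ℕ) (a : Fin (k + 1) → ℝ), (∀ i, 0 < a i) → ∃ g : ℝ → ℝ≥0∞,
      IsSymmUnimodal ((∑ i, a i) / 2) g ∧
        (Measure.pi fun i => volume[|Icc 0 (a i)]).map (fun x => ∑ i, x i) = volume.withDensity g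
  | 0, a, _ => by
    refine ⟨fun y => uniformPDF (Icc 0 (a 0)) y,
      by simpa using isSymmUnimodal_uniformPDF_Icc (a 0), ?_⟩
    rw [map_sum_pi_fin_succ, Measure.pi_of_empty, Measure.map_dirac' (by fun_prop),
      Finset.univ_eq_empty, Finset.sum_empty, Measure.conv_dirac_zero,
      withDensity_uniformPDF _ measurableSet_Icc]
  | k + 1, a, ha => by
    obtain ⟨g, hg, hlaw⟩ :=
      exists_isSymmUnimodal_map_sum_pi_cond_Icc k (fun i => a i.succ) (fun i => ha _)
    refine ⟨(fun y => uniformPDF (Icc 0 (a 0)) y) ⋆ₗ g, ?_, ?_⟩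
    · convert hg.uniformPDF_Icc_lconvolution (ha 0).le using 1
      rw [Fin.sum_univ_succ]; ring
    · rw [map_sum_pi_fin_succ, hlaw, ← withDensity_uniformPDF _ measurableSet_Icc,
        conv_withDensity_eq_lconvolution (measurable_uniformPDF _ measurableSet_Icc) hg.measurable]

lemma one_le_map_sum_pi_cond_Icc {ι : Type*} [Fintype ι] (a : ι → ℝ) (ha : ∀ i, 0 < a i) :
    1 ≤ (Measure.pi fun i => volume[|Icc 0 (a i)]).map (fun x => ∑ i, x i)
      (Icc 0 (∑ i, a i)) := by
  rw [Measure.map_apply (by fun_prop) measurableSet_Icc]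
  calc 1 = Measure.pi (fun i => volume[|Icc 0 (a i)]) (univ.pi fun i => Icc 0 (a i)) := by
        rw [Measure.pi_pi]
        exact (Finset.prod_eq_one fun i _ => cond_apply_self (by simp [ha i]) (by simp)).symm
    _ ≤ _ := measure_mono fun x hx => by
        simp only [mem_pi, mem_univ, forall_const, mem_Icc] at hx
        exact ⟨Finset.sum_nonneg fun i _ => (hx i).1, Finset.sum_le_sum fun i _ => (hx i).2⟩

lemma ofReal_div_le_map_sum_pi_cond_Icc {m : ℕ} (hm : m ≠ 0) (a : Fin m → ℝ) (ha : ∀ i, 0 < a i)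
    {t : ℝ} (ht : 0 ≤ t) (hsum : ∑ i, a i = 1 + t) :
    ENNReal.ofReal ((1 - t) / (1 + t))
      ≤ (Measure.pi fun i => volume[|Icc 0 (a i)]).map (fun x => ∑ i, x i) (Icc t 1) := by
  rcases le_or_gt 1 t with ht1 | ht1
  · rw [ENNReal.ofReal_of_nonpos (div_nonpos_of_nonpos_of_nonneg (by linarith) (by linarith))]
    exact bot_le
  obtain ⟨k, rfl⟩ := Nat.exists_eq_succ_of_ne_zero hm
  obtain ⟨g, hg, hlaw⟩ := exists_isSymmUnimodal_map_sum_pi_cond_Icc k a ha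
  have hmass := one_le_map_sum_pi_cond_Icc a ha
  rw [hlaw, withDensity_apply _ measurableSet_Icc] at hmass ⊢
  rw [hsum] at hg hmass
  have hle := hg.setLIntegral_Icc_le (r := (1 - t) / 2) (R := (1 + t) / 2) (by linarith)
    (by linarith)
  have hcentral : Icc ((1 + t) / 2 - (1 - t) / 2) ((1 + t) / 2 + (1 - t) / 2) = Icc t 1 := by
    congr 1 <;> ring
  rw [sub_self, add_halves, hcentral, div_div_div_cancel_right₀ two_ne_zero] at hle
  have hratio : 0 < (1 + t) / (1 - t) := div_pos (by linarith) (by linarith)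
  rw [← inv_div, ENNReal.ofReal_inv_of_pos hratio,
    ENNReal.inv_le_iff_le_mul (fun _ => by simpa using hratio)
      (fun h => absurd h ENNReal.ofReal_ne_top)]
  exact hmass.trans hle

theorem stmt_5_general (n : ℕ) (hn : 3 ≤ n) (B : ℝ)
    (s : Fin (n - 1) → ℝ)
    (hs1 : ∀ i, s i ≤ 1 - (n : ℝ) ^ (-(2 * B + 2)))
    (s₁ : ℝ) (hs₁def : s₁ = ((n : ℝ) - 2) - ∑ i, s i)
    (hs₁0 : 0 ≤ s₁) (hs₁1 : s₁ ≤ 1 - (n : ℝ) ^ (-(2 * B + 2)))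
    (μ : Measure (Fin (n - 1) → ℝ))
    (hμ : μ = Measure.pi (fun i =>
      (volume (Set.Icc (0 : ℝ) (1 - s i)))⁻¹ •
        volume.restrict (Set.Icc (0 : ℝ) (1 - s i)))) :
    ENNReal.ofReal ((1 - s₁) / (1 + s₁)) ≤
        μ {x | s₁ ≤ ∑ i, x i ∧ ∑ i, x i ≤ 1} ∧
      (n : ℝ) ^ (-(2 * B + 2)) / 2 ≤ (1 - s₁) / (1 + s₁) := by
  have hδ : 0 < (n : ℝ) ^ (-(2 * B + 2)) := Real.rpow_pos_of_pos (by positivity) _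
  refine ⟨?_, ?_⟩
  · have hsum : ∑ i, (1 - s i) = 1 + s₁ := by
      rw [Finset.sum_sub_distrib, Finset.sum_const, Finset.card_univ, Fintype.card_fin,
        nsmul_eq_mul, mul_one, Nat.cast_sub (by omega : 1 ≤ n), Nat.cast_one]
      linarith
    rw [hμ, show {x : Fin (n - 1) → ℝ | s₁ ≤ ∑ i, x i ∧ ∑ i, x i ≤ 1}
      = (fun x => ∑ i, x i) ⁻¹' Icc s₁ 1 from rfl,
      ← Measure.map_apply (by fun_prop) measurableSet_Icc]
    exact ofReal_div_le_map_sum_pi_cond_Icc (by omega) (fun i => 1 - s i)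
      (fun i => by linarith [hs1 i]) hs₁0 hsum
  · calc (n : ℝ) ^ (-(2 * B + 2)) / 2 ≤ (1 - s₁) / 2 := by gcongr; linarith
      _ ≤ (1 - s₁) / (1 + s₁) :=
          div_le_div_of_nonneg_left (by linarith) (by linarith) (by linarith)

/-- Let `x'_2, ..., x'_n` be independent, `x'_i` uniform on `[0, 1−s_i]`,
with each `s_i ≤ 1 − n^(−2B−2)` and `s_1 := (n−2) − ∑ s_i ∈ [0, 1 − n^(−2B−2)]`.
Then `P(s_1 ≤ ∑ x'_i ≤ 1) ≥ (1−s_1)/(1+s_1)`, which is `Ω(n^(−2B−2))`. -/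
theorem stmt_5 (n : ℕ) (hn : 3 ≤ n) (B : ℝ) (hB : 0 < B)
    (s : Fin (n - 1) → ℝ)
    (hs0 : ∀ i, 0 ≤ s i)
    (hs1 : ∀ i, s i ≤ 1 - (n : ℝ) ^ (-(2 * B + 2)))
    (s₁ : ℝ) (hs₁def : s₁ = ((n : ℝ) - 2) - ∑ i, s i)
    (hs₁0 : 0 ≤ s₁) (hs₁1 : s₁ ≤ 1 - (n : ℝ) ^ (-(2 * B + 2)))
    (μ : Measure (Fin (n - 1) → ℝ))
    (hμ : μ = Measure.pi (fun i =>
      (volume (Set.Icc (0 : ℝ) (1 - s i)))⁻¹ •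
        volume.restrict (Set.Icc (0 : ℝ) (1 - s i)))) :
    ENNReal.ofReal ((1 - s₁) / (1 + s₁)) ≤
        μ {x | s₁ ≤ ∑ i, x i ∧ ∑ i, x i ≤ 1} ∧
      (n : ℝ) ^ (-(2 * B + 2)) / 2 ≤ (1 - s₁) / (1 + s₁) :=
  stmt_5_general n hn B s hs1 s₁ hs₁def hs₁0 hs₁1 μ hμ
end

section
/- For Hermitian n×n matrices U, V and a fixed Hermitian matrix F, and for every polynomial p(x) = x^k with k ≥ 0, one has tr((U+F)^k) + tr((V+F)^k) − 2·tr(((U+V)/2 + F)^k) ≥ 0 whenever k is even; more generally, for any convex function g : ℝ → ℝ applied via the functional calculus, the map M ↦ tr(g(M + F)) on Hermitian matrices is convex. -/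
/-!
Write a Hermitian `A = T D Tᴴ`. For a unitary `S`, the diagonal of `Sᴴ A S` is `P λ(A)` where
`P = (|(Sᴴ T)ᵢⱼ|²)` is doubly stochastic, so Jensen's inequality gives Peierls' inequality
`∑ᵢ g((Sᴴ A S)ᵢᵢ) ≤ ∑ᵢ g(λᵢ(A))` for convex `g`. Taking `S` to diagonalize `W = a A + b B`, each
`λᵢ(W)` is `a (Sᴴ A S)ᵢᵢ + b (Sᴴ B S)ᵢᵢ`; convexity of `g` followed by Peierls' inequality for `A`
and `B` gives convexity of `M ↦ tr g(M)`. The even-power case is `g x = xᵏ`, as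
`tr(Aᵏ) = ∑ᵢ λᵢ(A)ᵏ`.
-/

open Matrix Finset

theorem ConvexOn.sum_comp_mulVec_le {n : Type*} [Fintype n] [DecidableEq n] {s : Set ℝ}
    {g : ℝ → ℝ} (hg : ConvexOn ℝ s g) {M : Matrix n n ℝ} (hM : M ∈ doublyStochastic ℝ n)
    {x : n → ℝ} (hx : ∀ i, x i ∈ s) :
    ∑ i, g ((M *ᵥ x) i) ≤ ∑ i, g (x i) :=
  calc ∑ i, g ((M *ᵥ x) i)
      ≤ ∑ i, ∑ j, M i j * g (x j) :=
        sum_le_sum fun i _ => hg.map_sum_le (fun j _ => nonneg_of_mem_doublyStochastic hM)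
          (sum_row_of_mem_doublyStochastic hM i) fun j _ => hx j
    _ = ∑ j, g (x j) := by
        rw [sum_comm]
        simp only [← sum_mul, sum_col_of_mem_doublyStochastic hM, one_mul]

namespace Matrix

variable {𝕜 : Type*} [RCLike 𝕜] {n : Type*} [Fintype n] [DecidableEq n]

def normSqEntries (Q : Matrix n n 𝕜) : Matrix n n ℝ :=
  of fun i j => ‖Q i j‖ ^ 2

theorem normSqEntries_mem_doublyStochastic {Q : Matrix n n 𝕜} (hQ : Q ∈ unitaryGroup n 𝕜) :
    normSqEntries Q ∈ doublyStochastic ℝ n := by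
  have diag_eq_one {P : Matrix n n 𝕜} (hP : P * star P = 1) (i : n) :
      ∑ j, ‖P i j‖ ^ 2 = 1 := by
    have h := congr_fun₂ hP i i
    simp only [mul_apply, star_apply, one_apply_eq, RCLike.star_def, RCLike.mul_conj] at h
    exact_mod_cast h
  refine mem_doublyStochastic_iff_sum.mpr
    ⟨fun i j => sq_nonneg ‖Q i j‖, diag_eq_one (mem_unitaryGroup_iff.mp hQ), fun j => ?_⟩
  simpa [normSqEntries, star_apply] using
    diag_eq_one (P := star Q) (by simpa using mem_unitaryGroup_iff'.mp hQ) j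

theorem re_mul_diagonal_mul_conjTranspose_apply (Q : Matrix n n 𝕜) (d : n → ℝ) (i : n) :
    RCLike.re ((Q * diagonal (RCLike.ofReal ∘ d) * Qᴴ : Matrix n n 𝕜) i i) =
      (normSqEntries Q *ᵥ d) i := by
  rw [mul_apply, map_sum]
  simp only [mul_diagonal, conjTranspose_apply, RCLike.star_def, mulVec, dotProduct,
    normSqEntries, of_apply]
  refine sum_congr rfl fun j _ => ?_
  rw [mul_right_comm, RCLike.mul_conj, Function.comp_apply]
  norm_cast

namespace IsHermitian

variable {A B W : Matrix n n 𝕜}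

theorem sum_comp_re_diag_conj_le (hA : A.IsHermitian) {S : Matrix n n 𝕜}
    (hS : S ∈ unitaryGroup n 𝕜) {g : ℝ → ℝ} (hg : ConvexOn ℝ Set.univ g) :
    ∑ i, g (RCLike.re ((Sᴴ * A * S) i i)) ≤ ∑ i, g (hA.eigenvalues i) := by
  set T : Matrix n n 𝕜 := ↑hA.eigenvectorUnitary
  have hQ : Sᴴ * T ∈ unitaryGroup n 𝕜 := mul_mem (Unitary.star_mem hS) hA.eigenvectorUnitary.2
  have hconj : Sᴴ * A * S = Sᴴ * T * diagonal (RCLike.ofReal ∘ hA.eigenvalues) * (Sᴴ * T)ᴴ := by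
    conv_lhs => rw [hA.spectral_theorem, Unitary.conjStarAlgAut_apply]
    simp only [T, conjTranspose_mul, conjTranspose_conjTranspose, star_eq_conjTranspose,
      Matrix.mul_assoc]
  simp only [hconj, re_mul_diagonal_mul_conjTranspose_apply]
  exact hg.sum_comp_mulVec_le (normSqEntries_mem_doublyStochastic hQ) fun _ => Set.mem_univ _

theorem sum_comp_eigenvalues_le_of_eq_smul_add_smul (hA : A.IsHermitian) (hB : B.IsHermitian)
    (hW : W.IsHermitian)
    {a b : ℝ} (ha : 0 ≤ a) (hb : 0 ≤ b) (hab : a + b = 1) (hWe : W = a • A + b • B)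
    {g : ℝ → ℝ} (hg : ConvexOn ℝ Set.univ g) :
    ∑ i, g (hW.eigenvalues i) ≤ a * ∑ i, g (hA.eigenvalues i) + b * ∑ i, g (hB.eigenvalues i) := by
  subst hWe
  set S : Matrix n n 𝕜 := ↑hW.eigenvectorUnitary
  have hdiag (i : n) : hW.eigenvalues i =
      a * RCLike.re ((Sᴴ * A * S) i i) + b * RCLike.re ((Sᴴ * B * S) i i) := by
    have h := congr_arg (fun M : Matrix n n 𝕜 => RCLike.re (M i i))
      hW.conjStarAlgAut_star_eigenvectorUnitary
    simpa [Unitary.conjStarAlgAut_star_apply, Matrix.mul_add, Matrix.add_mul, RCLike.smul_re,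
      star_eq_conjTranspose] using h.symm
  calc ∑ i, g (hW.eigenvalues i)
      ≤ ∑ i, (a * g (RCLike.re ((Sᴴ * A * S) i i)) + b * g (RCLike.re ((Sᴴ * B * S) i i))) :=
        sum_le_sum fun i _ => by
          simpa only [hdiag, smul_eq_mul] using hg.2 trivial trivial ha hb hab
    _ ≤ a * ∑ i, g (hA.eigenvalues i) + b * ∑ i, g (hB.eigenvalues i) := by
        rw [sum_add_distrib, ← mul_sum, ← mul_sum]
        exact add_le_add
          (mul_le_mul_of_nonneg_left (hA.sum_comp_re_diag_conj_le hW.eigenvectorUnitary.2 hg) ha)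
          (mul_le_mul_of_nonneg_left (hB.sum_comp_re_diag_conj_le hW.eigenvectorUnitary.2 hg) hb)

theorem trace_pow (hA : A.IsHermitian) (k : ℕ) :
    (A ^ k).trace = ∑ i, (hA.eigenvalues i : 𝕜) ^ k := by
  conv_lhs => rw [hA.spectral_theorem, ← map_pow, Unitary.conjStarAlgAut_apply, trace_mul_cycle,
    Unitary.coe_star_mul_self, Matrix.one_mul, diagonal_pow, trace_diagonal]
  rfl

end IsHermitian

end Matrix

theorem stmt_11_general (n : ℕ) (U V F : Matrix (Fin n) (Fin n) ℂ)
    (hUF : (U + F).IsHermitian) (hVF : (V + F).IsHermitian)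
    (hW : (((1 : ℂ) / 2) • (U + V) + F).IsHermitian)
    (g : ℝ → ℝ) (hg : ConvexOn ℝ Set.univ g) :
    (∀ k : ℕ, Even k →
      0 ≤ (((U + F) ^ k).trace + ((V + F) ^ k).trace
            - 2 * ((((1 : ℂ) / 2) • (U + V) + F) ^ k).trace).re) ∧
    2 * ∑ i, g (hW.eigenvalues i) ≤
      (∑ i, g (hUF.eigenvalues i)) + ∑ i, g (hVF.eigenvalues i) := by
  have hmid : ((1 : ℂ) / 2) • (U + V) + F = (1 / 2 : ℝ) • (U + F) + (1 / 2 : ℝ) • (V + F) := by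
    ext i j
    simp only [Matrix.add_apply, Matrix.smul_apply, Complex.real_smul, smul_eq_mul]
    push_cast
    ring
  have hconvex {f : ℝ → ℝ} (hf : ConvexOn ℝ Set.univ f) :
      2 * ∑ i, f (hW.eigenvalues i) ≤
        (∑ i, f (hUF.eigenvalues i)) + ∑ i, f (hVF.eigenvalues i) := by
    have := hUF.sum_comp_eigenvalues_le_of_eq_smul_add_smul hVF hW (by norm_num) (by norm_num)
      (by norm_num) hmid hf
    linarith
  refine ⟨fun k hk => ?_, hconvex hg⟩
  rw [hUF.trace_pow, hVF.trace_pow, hW.trace_pow]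
  have := hconvex hk.convexOn_pow
  simp only [Complex.add_re, Complex.sub_re, Complex.mul_re, Complex.re_ofNat, Complex.im_ofNat,
    Complex.re_sum, Complex.coe_algebraMap, ← Complex.ofReal_pow, Complex.ofReal_re, zero_mul,
    sub_zero]
  linarith

/-- For Hermitian `n×n` matrices `U`, `V` and a fixed Hermitian `F`:
for every even `k`, `tr((U+F)^k) + tr((V+F)^k) − 2 tr(((U+V)/2+F)^k) ≥ 0`;
and for any convex `g : ℝ → ℝ` applied via the functional calculus
(`tr g(H) = ∑ g(λ_i(H))`), the map `M ↦ tr(g(M+F))` is convex, i.e.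
`2 tr(g((U+V)/2+F)) ≤ tr(g(U+F)) + tr(g(V+F))`. -/
theorem stmt_11 (n : ℕ) (U V F : Matrix (Fin n) (Fin n) ℂ)
    (hU : U.IsHermitian) (hV : V.IsHermitian) (hF : F.IsHermitian)
    (hUF : (U + F).IsHermitian) (hVF : (V + F).IsHermitian)
    (hW : (((1 : ℂ) / 2) • (U + V) + F).IsHermitian)
    (g : ℝ → ℝ) (hg : ConvexOn ℝ Set.univ g) :
    (∀ k : ℕ, Even k →
      0 ≤ (((U + F) ^ k).trace + ((V + F) ^ k).trace
            - 2 * ((((1 : ℂ) / 2) • (U + V) + F) ^ k).trace).re) ∧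
    2 * ∑ i, g (hW.eigenvalues i) ≤
      (∑ i, g (hUF.eigenvalues i)) + ∑ i, g (hVF.eigenvalues i) :=
  stmt_11_general n U V F hUF hVF hW g hg
end

section
/- Let g : ℝ → ℝ be Lipschitz with constant L, and let F be a fixed n×n Hermitian matrix. Then the function M ↦ tr(g((1/√n)M + F)), defined on n×n Hermitian matrices M with the Hilbert–Schmidt norm, is Lipschitz with constant at most 2L. -/
/-!
For Hermitian `A = P diag(α) P*` and `B = Q diag(β) Q*`, unitary invariance of the
Hilbert–Schmidt norm gives `‖A - B‖²_HS = ∑ᵢⱼ |Wᵢⱼ|² (αᵢ - βⱼ)²` with `W = P* Q` unitary, so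
`(|Wᵢⱼ|²)` is doubly stochastic. By Birkhoff's theorem this linear function of `(|Wᵢⱼ|²)` is bounded
below by its value at some permutation matrix: `∑ᵢ (αᵢ - β_{σ i})² ≤ ‖A - B‖²_HS`
(Hoffman–Wielandt). Matching eigenvalues along `σ`, the Lipschitz bound and Cauchy–Schwarz give
`|∑ g(αᵢ) - ∑ g(βᵢ)| ≤ L √n ‖A - B‖_HS`, and the factor `1/√n` in `A - B = (U - V)/√n` cancels `√n`.
-/

open Matrix Finset NNReal

lemma sum_abs_le_sqrt_card_mul_sqrt_sum_sq {ι : Type*} [Fintype ι] (x : ι → ℝ) :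
    ∑ i, |x i| ≤ √(Fintype.card ι) * √(∑ i, x i ^ 2) := by
  rw [← Real.sqrt_mul (Nat.cast_nonneg _), Real.le_sqrt (by positivity) (by positivity)]
  have h := sq_sum_le_card_mul_sum_sq (s := univ) (f := fun i => |x i|)
  simp only [sq_abs, card_univ] at h
  exact h

lemma exists_perm_sum_le_of_mem_doublyStochastic {n : Type*} [Fintype n] [DecidableEq n]
    {D : Matrix n n ℝ} (hD : D ∈ doublyStochastic ℝ n) (c : Matrix n n ℝ) :
    ∃ σ : Equiv.Perm n, ∑ i, c i (σ i) ≤ ∑ i, ∑ j, D i j * c i j := by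
  let f : Matrix n n ℝ →ₗ[ℝ] ℝ := (traceLinearMap n ℝ ℝ).comp (LinearMap.mulRight ℝ cᵀ)
  rw [← SetLike.mem_coe, doublyStochastic_eq_convexHull_permMatrix] at hD
  obtain ⟨_, ⟨σ, rfl⟩, hσ⟩ :=
    (f.concaveOn convex_univ).exists_le_of_mem_convexHull (Set.subset_univ _) hD
  refine ⟨σ, ?_⟩
  calc ∑ i, c i (σ i) = f (σ.permMatrix ℝ) := by
        simp [f, PEquiv.toMatrix_toPEquiv_mul, trace]
    _ ≤ f D := hσ
    _ = ∑ i, ∑ j, D i j * c i j := by simp [f, trace, mul_apply]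

namespace Matrix

variable {𝕜 : Type*} [RCLike 𝕜] {m n : Type*} [Fintype m] [Fintype n] [DecidableEq n]

omit [DecidableEq n] in
lemma trace_conjTranspose_mul_self_eq_sum_norm_sq (M : Matrix m n 𝕜) :
    (Mᴴ * M).trace = ((∑ i, ∑ j, ‖M i j‖ ^ 2 : ℝ) : 𝕜) := by
  simp only [trace, diag, mul_apply, conjTranspose_apply, RCLike.star_def, RCLike.conj_mul]
  push_cast
  exact Finset.sum_comm

lemma sum_norm_sq_unitary_mul_mul {P Q : Matrix n n 𝕜} (hP : P ∈ unitaryGroup n 𝕜)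
    (hQ : Q ∈ unitaryGroup n 𝕜) (M : Matrix n n 𝕜) :
    ∑ i, ∑ j, ‖(P * M * Q) i j‖ ^ 2 = ∑ i, ∑ j, ‖M i j‖ ^ 2 := by
  have hPP : Pᴴ * P = 1 := (mem_unitaryGroup_iff').1 hP
  have hQQ : Q * Qᴴ = 1 := (mem_unitaryGroup_iff).1 hQ
  have h : ((P * M * Q)ᴴ * (P * M * Q)).trace = (Mᴴ * M).trace := by
    simp only [conjTranspose_mul, Matrix.mul_assoc]
    rw [← Matrix.mul_assoc Pᴴ P, hPP, Matrix.one_mul, trace_mul_comm, Matrix.mul_assoc,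
      Matrix.mul_assoc, hQQ, Matrix.mul_one]
  simpa only [trace_conjTranspose_mul_self_eq_sum_norm_sq, RCLike.ofReal_inj] using h

lemma normSq_entries_mem_doublyStochastic {W : Matrix n n 𝕜} (hW : W ∈ unitaryGroup n 𝕜) :
    (of fun i j => ‖W i j‖ ^ 2) ∈ doublyStochastic ℝ n := by
  have row (i : n) : ∑ j, ‖W i j‖ ^ 2 = 1 := by
    have h := congr_fun₂ ((mem_unitaryGroup_iff).1 hW) i i
    simp only [mul_apply, star_apply, RCLike.star_def, RCLike.mul_conj, one_apply_eq] at h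
    exact_mod_cast h
  have col (j : n) : ∑ i, ‖W i j‖ ^ 2 = 1 := by
    have h := congr_fun₂ ((mem_unitaryGroup_iff').1 hW) j j
    simp only [mul_apply, star_apply, RCLike.star_def, RCLike.conj_mul, one_apply_eq] at h
    exact_mod_cast h
  rw [mem_doublyStochastic_iff_sum]
  exact ⟨fun i j => sq_nonneg ‖W i j‖, row, col⟩

namespace IsHermitian

variable {A B : Matrix n n 𝕜}

lemma star_eigenvectorUnitary_mul (hA : A.IsHermitian) :
    star (hA.eigenvectorUnitary : Matrix n n 𝕜) * A =
      diagonal (RCLike.ofReal ∘ hA.eigenvalues) * star (hA.eigenvectorUnitary : Matrix n n 𝕜) := by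
  rw [← hA.conjStarAlgAut_star_eigenvectorUnitary, Unitary.conjStarAlgAut_star_apply,
    Matrix.mul_assoc, Unitary.mul_star_self_of_mem hA.eigenvectorUnitary.2, Matrix.mul_one]

lemma mul_eigenvectorUnitary (hA : A.IsHermitian) :
    A * (hA.eigenvectorUnitary : Matrix n n 𝕜) =
      (hA.eigenvectorUnitary : Matrix n n 𝕜) * diagonal (RCLike.ofReal ∘ hA.eigenvalues) := by
  rw [← hA.conjStarAlgAut_star_eigenvectorUnitary, Unitary.conjStarAlgAut_star_apply,
    ← Matrix.mul_assoc, ← Matrix.mul_assoc, Unitary.mul_star_self_of_mem hA.eigenvectorUnitary.2,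
    Matrix.one_mul]

/-- In the eigenbases of `A` and `B`, the matrix `A - B` has entries `(αᵢ - βⱼ) Wᵢⱼ`,
where `W` is the change of basis between the two eigenbases. -/
lemma sum_norm_sq_sub_eq (hA : A.IsHermitian) (hB : B.IsHermitian) :
    ∑ i, ∑ j, ‖(A - B) i j‖ ^ 2 = ∑ i, ∑ j,
      ‖(star (hA.eigenvectorUnitary : Matrix n n 𝕜) * hB.eigenvectorUnitary) i j‖ ^ 2 *
        (hA.eigenvalues i - hB.eigenvalues j) ^ 2 := by
  set P := hA.eigenvectorUnitary
  set Q := hB.eigenvectorUnitary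
  have h : star (P : Matrix n n 𝕜) * (A - B) * Q = of fun i j =>
      ((hA.eigenvalues i - hB.eigenvalues j : ℝ) : 𝕜) * (star (P : Matrix n n 𝕜) * Q) i j := by
    rw [Matrix.mul_sub, Matrix.sub_mul, hA.star_eigenvectorUnitary_mul, Matrix.mul_assoc _ B,
      hB.mul_eigenvectorUnitary, Matrix.mul_assoc, ← Matrix.mul_assoc (star _)]
    ext i j
    simp only [sub_apply, diagonal_mul, mul_diagonal, of_apply, Function.comp_apply,
      RCLike.ofReal_sub]
    ring
  rw [← sum_norm_sq_unitary_mul_mul (Unitary.star_mem P.2) Q.2, h]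
  simp only [of_apply, norm_mul, RCLike.norm_ofReal, sq_abs, mul_pow, mul_comm]

/-- The Hoffman–Wielandt inequality. -/
theorem exists_perm_sum_sq_eigenvalues_sub_le (hA : A.IsHermitian) (hB : B.IsHermitian) :
    ∃ σ : Equiv.Perm n, ∑ i, (hA.eigenvalues i - hB.eigenvalues (σ i)) ^ 2 ≤
      ∑ i, ∑ j, ‖(A - B) i j‖ ^ 2 := by
  have hW := normSq_entries_mem_doublyStochastic
    (mul_mem (Unitary.star_mem hA.eigenvectorUnitary.2) hB.eigenvectorUnitary.2)
  obtain ⟨σ, hσ⟩ := exists_perm_sum_le_of_mem_doublyStochastic hW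
    (of fun i j => (hA.eigenvalues i - hB.eigenvalues j) ^ 2)
  exact ⟨σ, hσ.trans_eq (hA.sum_norm_sq_sub_eq hB).symm⟩

theorem abs_sum_comp_eigenvalues_sub_le {g : ℝ → ℝ} {K : ℝ≥0} (hg : LipschitzWith K g)
    (hA : A.IsHermitian) (hB : B.IsHermitian) :
    |∑ i, g (hA.eigenvalues i) - ∑ i, g (hB.eigenvalues i)| ≤
      K * √(Fintype.card n) * √(∑ i, ∑ j, ‖(A - B) i j‖ ^ 2) := by
  obtain ⟨σ, hσ⟩ := hA.exists_perm_sum_sq_eigenvalues_sub_le hB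
  set x := fun i => hA.eigenvalues i - hB.eigenvalues (σ i)
  calc |∑ i, g (hA.eigenvalues i) - ∑ i, g (hB.eigenvalues i)|
      = |∑ i, (g (hA.eigenvalues i) - g (hB.eigenvalues (σ i)))| := by
        rw [sum_sub_distrib, Equiv.sum_comp σ fun i => g (hB.eigenvalues i)]
    _ ≤ ∑ i, |g (hA.eigenvalues i) - g (hB.eigenvalues (σ i))| := abs_sum_le_sum_abs _ _
    _ ≤ ∑ i, K * |x i| := sum_le_sum fun i _ => by
        simpa only [Real.dist_eq] using hg.dist_le_mul _ _
    _ = K * ∑ i, |x i| := (mul_sum _ _ _).symm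
    _ ≤ K * (√(Fintype.card n) * √(∑ i, x i ^ 2)) := by
        gcongr; exact sum_abs_le_sqrt_card_mul_sqrt_sum_sq x
    _ ≤ K * (√(Fintype.card n) * √(∑ i, ∑ j, ‖(A - B) i j‖ ^ 2)) := by gcongr
    _ = K * √(Fintype.card n) * √(∑ i, ∑ j, ‖(A - B) i j‖ ^ 2) := (mul_assoc _ _ _).symm

end IsHermitian

end Matrix

theorem stmt_12_general (n : ℕ) (L : ℝ) (hL : 0 ≤ L)
    (g : ℝ → ℝ) (hg : ∀ x y : ℝ, |g x - g y| ≤ L * |x - y|)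
    (F : Matrix (Fin n) (Fin n) ℂ)
    (U V : Matrix (Fin n) (Fin n) ℂ)
    (hU' : (((1 : ℂ) / Real.sqrt n) • U + F).IsHermitian)
    (hV' : (((1 : ℂ) / Real.sqrt n) • V + F).IsHermitian) :
    |(∑ i, g (hU'.eigenvalues i)) - ∑ i, g (hV'.eigenvalues i)| ≤
      2 * L * Real.sqrt (∑ i, ∑ j, ‖(U - V) i j‖ ^ 2) := by
  set T := ∑ i, ∑ j, ‖(U - V) i j‖ ^ 2
  have hg' : LipschitzWith L.toNNReal g := .of_dist_le_mul fun x y => by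
    simpa only [Real.dist_eq, Real.coe_toNNReal _ hL] using hg x y
  have hHS : ∑ i, ∑ j, ‖((((1 : ℂ) / √n) • U + F) - (((1 : ℂ) / √n) • V + F)) i j‖ ^ 2 =
      T / n := by
    rw [add_sub_add_right_eq_sub, ← smul_sub]
    simp only [Matrix.smul_apply, smul_eq_mul, norm_mul, mul_pow, ← mul_sum, norm_div, norm_one,
      Complex.norm_real, Real.norm_of_nonneg (Real.sqrt_nonneg _), div_pow, one_pow,
      Real.sq_sqrt n.cast_nonneg, T]
    ring
  have hcancel : √n * √(T / n) ≤ √T := by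
    rw [← Real.sqrt_mul n.cast_nonneg]
    refine Real.sqrt_le_sqrt ?_
    rcases eq_or_ne (n : ℝ) 0 with h | h
    · simp only [h, zero_mul]; positivity
    · rw [mul_div_cancel₀ _ h]
  calc _ ≤ L * √n * √(T / n) := by
        simpa only [hHS, Fintype.card_fin, Real.coe_toNNReal _ hL] using
          Matrix.IsHermitian.abs_sum_comp_eigenvalues_sub_le hg' hU' hV'
    _ ≤ L * √T := by rw [mul_assoc]; gcongr
    _ ≤ 2 * L * √T := by gcongr; linarith

/-- If `g : ℝ → ℝ` is `L`-Lipschitz and `F` is a fixed `n×n` Hermitian matrix,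
then the map `M ↦ tr(g((1/√n)M + F))` (via the functional calculus,
`tr g(H) = ∑ g(λ_i(H))`) on Hermitian matrices with the Hilbert–Schmidt norm
is Lipschitz with constant at most `2L`. -/
theorem stmt_12 (n : ℕ) (hn : 1 ≤ n) (L : ℝ) (hL : 0 ≤ L)
    (g : ℝ → ℝ) (hg : ∀ x y : ℝ, |g x - g y| ≤ L * |x - y|)
    (F : Matrix (Fin n) (Fin n) ℂ) (hF : F.IsHermitian)
    (U V : Matrix (Fin n) (Fin n) ℂ)
    (hU : U.IsHermitian) (hV : V.IsHermitian)
    (hU' : (((1 : ℂ) / Real.sqrt n) • U + F).IsHermitian)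
    (hV' : (((1 : ℂ) / Real.sqrt n) • V + F).IsHermitian) :
    |(∑ i, g (hU'.eigenvalues i)) - ∑ i, g (hV'.eigenvalues i)| ≤
      2 * L * Real.sqrt (∑ i, ∑ j, ‖(U - V) i j‖ ^ 2) :=
  stmt_12_general n L hL g hg F U V hU' hV'
end
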